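/- arXiv:0902.4587 — 4 statements merged into one kernel-verified Lean document; each statement's English description precedes it below -/
import Mathlib

section
/- If A and B are matrices with nontrivial kernels (rank-deficient), then spark(A ⊗ B) ≤ min{spark(A), spark(B)}. -/
open Classical Kronecker

/-- Number of nonzero entries of a vector. -/
noncomputable def sparsity {n : Type*} (x : n → ℝ) : ℕ := Set.ncard {i | x i ≠ 0}

/-- The spark of a matrix: the minimal number of nonzero entries of a nonzero kernel
vector; if the kernel is trivial we use the convention `spark A = (number of columns) + 1`. -/
noncomputable def spark {m n : Type*} [Fintype m] [Fintype n] (A : Matrix m n ℝ) : ℕ :=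
  if ∃ x : n → ℝ, x ≠ 0 ∧ A.mulVec x = 0 then
    sInf {k | ∃ x : n → ℝ, x ≠ 0 ∧ A.mulVec x = 0 ∧ sparsity x = k}
  else Fintype.card n + 1

/-- Mutual incoherence: the largest absolute inner product of two distinct columns. -/
noncomputable def mutInc {m n : Type*} [Fintype m] (A : Matrix m n ℝ) : ℝ :=
  sSup {v | ∃ i j, i ≠ j ∧ v = |∑ k, A k i * A k j|}

/-- Off-diagonal mutual incoherence of two matrices. -/
noncomputable def mutIncOD {m n : Type*} [Fintype m] (A B : Matrix m n ℝ) : ℝ :=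
  sSup {v | ∃ i j, i ≠ j ∧ v = |∑ k, A k i * B k j|}

/-- Diagonal mutual incoherence of two matrices. -/
noncomputable def mutIncD {m n : Type*} [Fintype m] (A B : Matrix m n ℝ) : ℝ :=
  sSup {v | ∃ i, v = |∑ k, A k i * B k i|}

/-- Mutual incoherence of a matrix whose columns are renormalized. -/
noncomputable def mutIncN {m n : Type*} [Fintype m] (C : Matrix m n ℝ) : ℝ :=
  sSup {v | ∃ i j, i ≠ j ∧
    v = |∑ k, C k i * C k j| /
        (Real.sqrt (∑ k, (C k i) ^ 2) * Real.sqrt (∑ k, (C k j) ^ 2))}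

/-- The `k`-restricted isometry constant of a matrix. -/
noncomputable def ripConst {m n : Type*} [Fintype m] [Fintype n] (k : ℕ)
    (A : Matrix m n ℝ) : ℝ :=
  sInf {δ | 0 ≤ δ ∧ ∀ x : n → ℝ, sparsity x ≤ k →
    (1 - δ) * ∑ i, (x i) ^ 2 ≤ ∑ i, (A.mulVec x i) ^ 2 ∧
    ∑ i, (A.mulVec x i) ^ 2 ≤ (1 + δ) * ∑ i, (x i) ^ 2}

/-- Iterated Kronecker product of a family of matrices (up to the standard
reindexing of the row/column index sets). -/
noncomputable def kronFamily {N : ℕ} {m n : Fin N → ℕ}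
    (A : ∀ i, Matrix (Fin (m i)) (Fin (n i)) ℝ) :
    Matrix (∀ i, Fin (m i)) (∀ i, Fin (n i)) ℝ :=
  fun r c => ∏ i, A i (r i) (c i)

/-! Since `(A ⊗ B)(x ⊗ y) = Ax ⊗ By`, a sparsest kernel vector `x` of `A` gives the kernel vector
`x ⊗ eⱼ` of `A ⊗ B` with the same number of nonzero entries; symmetrically for `B`. -/

open scoped Matrix

section Spark

variable {m n : Type*} [Fintype m] [Fintype n]

lemma spark_le_sparsity (M : Matrix m n ℝ) {x : n → ℝ} (hx : x ≠ 0) (hMx : M *ᵥ x = 0) :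
    spark M ≤ sparsity x := by
  rw [spark, if_pos ⟨x, hx, hMx⟩]
  exact Nat.sInf_le ⟨x, hx, hMx, rfl⟩

lemma exists_sparsity_eq_spark (M : Matrix m n ℝ) (h : ∃ x : n → ℝ, x ≠ 0 ∧ M *ᵥ x = 0) :
    ∃ x : n → ℝ, x ≠ 0 ∧ M *ᵥ x = 0 ∧ sparsity x = spark M := by
  rw [spark, if_pos h]
  obtain ⟨x, hx, hMx⟩ := h
  exact Nat.sInf_mem (s := {k | ∃ x : n → ℝ, x ≠ 0 ∧ M *ᵥ x = 0 ∧ sparsity x = k})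
    ⟨sparsity x, x, hx, hMx, rfl⟩

end Spark

section KroneckerVector

variable {ι κ : Type*}

lemma sparsity_single_one [DecidableEq ι] (i : ι) : sparsity (Pi.single i 1 : ι → ℝ) = 1 := by
  have : {j | (Pi.single i 1 : ι → ℝ) j ≠ 0} = {i} := by
    ext j
    by_cases h : j = i <;> simp [h]
  rw [sparsity, this, Set.ncard_singleton]

lemma sparsity_kronecker (x : ι → ℝ) (y : κ → ℝ) :
    sparsity (fun c : ι × κ => x c.1 * y c.2) = sparsity x * sparsity y := by
  have : {c : ι × κ | x c.1 * y c.2 ≠ 0} = {i | x i ≠ 0} ×ˢ {j | y j ≠ 0} := by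
    ext c
    simp
  rw [sparsity, this, Set.ncard_prod, sparsity, sparsity]

lemma kronecker_ne_zero {x : ι → ℝ} {y : κ → ℝ} (hx : x ≠ 0) (hy : y ≠ 0) :
    (fun c : ι × κ => x c.1 * y c.2) ≠ 0 := by
  obtain ⟨i, hi⟩ := Function.ne_iff.mp hx
  obtain ⟨j, hj⟩ := Function.ne_iff.mp hy
  exact Function.ne_iff.mpr ⟨(i, j), mul_ne_zero hi hj⟩

lemma kroneckerMap_mul_mulVec {p r : Type*} [Fintype ι] [Fintype κ]
    (A : Matrix p ι ℝ) (B : Matrix r κ ℝ) (x : ι → ℝ) (y : κ → ℝ) :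
    (A ⊗ₖ B) *ᵥ (fun c : ι × κ => x c.1 * y c.2) = fun c => (A *ᵥ x) c.1 * (B *ᵥ y) c.2 := by
  ext ⟨k, l⟩
  simp only [Matrix.mulVec, dotProduct, Fintype.sum_prod_type, Matrix.kroneckerMap_apply,
    Finset.sum_mul_sum]
  exact Finset.sum_congr rfl fun _ _ => Finset.sum_congr rfl fun _ _ => by ring

end KroneckerVector

lemma spark_kronecker_le_mul_sparsity {p q r s : Type*} [Fintype p] [Fintype q] [Fintype r]
    [Fintype s] (A : Matrix p q ℝ) (B : Matrix r s ℝ) {x : q → ℝ} {y : s → ℝ}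
    (hx : x ≠ 0) (hy : y ≠ 0) (hker : A *ᵥ x = 0 ∨ B *ᵥ y = 0) :
    spark (A ⊗ₖ B) ≤ sparsity x * sparsity y := by
  rw [← sparsity_kronecker]
  refine spark_le_sparsity _ (kronecker_ne_zero hx hy) ?_
  rw [kroneckerMap_mul_mulVec]
  ext c
  rcases hker with h | h <;> simp [h]

theorem stmt3 {p q r s : ℕ} (A : Matrix (Fin p) (Fin q) ℝ)
    (B : Matrix (Fin r) (Fin s) ℝ)
    (hA : ∃ x : Fin q → ℝ, x ≠ 0 ∧ A.mulVec x = 0)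
    (hB : ∃ x : Fin s → ℝ, x ≠ 0 ∧ B.mulVec x = 0) :
    spark (A ⊗ₖ B) ≤ min (spark A) (spark B) := by
  obtain ⟨x, hx, hAx, hxA⟩ := exists_sparsity_eq_spark A hA
  obtain ⟨y, hy, hBy, hyB⟩ := exists_sparsity_eq_spark B hB
  obtain ⟨i, -⟩ := Function.ne_iff.mp hx
  obtain ⟨j, -⟩ := Function.ne_iff.mp hy
  refine le_min ?_ ?_
  · calc spark (A ⊗ₖ B) ≤ sparsity x * sparsity (Pi.single j 1 : Fin s → ℝ) :=
          spark_kronecker_le_mul_sparsity A B hx (by simp) (.inl hAx)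
      _ = spark A := by rw [sparsity_single_one, mul_one, hxA]
  · calc spark (A ⊗ₖ B) ≤ sparsity (Pi.single i 1 : Fin q → ℝ) * sparsity y :=
          spark_kronecker_le_mul_sparsity A B (by simp) hy (.inr hBy)
      _ = spark B := by rw [sparsity_single_one, one_mul, hyB]
end

section
/- For rank-deficient matrices A₁, …, A_N, spark(A₁ ⊗ ⋯ ⊗ A_N) = min over 1 ≤ i ≤ N of spark(A_i). -/
/-
Both inequalities are witnessed by sparse null vectors. If `A i x = 0`, then `x` tensored with
standard basis vectors in all other slots is a null vector of `A₁ ⊗ ⋯ ⊗ A_N` with the same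
number of nonzero entries. Conversely, a null vector `x` of `A ⊗ B` yields a null vector of `A`
or of `B` that is no less sparse: either every row of `x` is killed by `B`, or some column of
`(1 ⊗ B) x` is a nonzero null vector of `A` whose support is contained in the projection of the
support of `x`. Induction on `N` through `A₁ ⊗ (A₂ ⊗ ⋯ ⊗ A_N)` finishes the argument.
-/

open Classical Kronecker

section Sparsity

variable {α β : Type*}

theorem sparsity_eq_ncard_support (x : α → ℝ) : sparsity x = x.support.ncard := rfl

theorem sparsity_pos_iff [Finite α] {x : α → ℝ} : 0 < sparsity x ↔ x ≠ 0 :=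
  (Set.ncard_pos (Set.toFinite _)).trans Function.support_nonempty_iff

theorem sparsity_le_of_support_subset_image [Finite β] {x : β → ℝ} {y : α → ℝ} (π : β → α)
    (h : y.support ⊆ π '' x.support) : sparsity y ≤ sparsity x :=
  (Set.ncard_le_ncard h ((Set.toFinite _).image π)).trans (Set.ncard_image_le (Set.toFinite _))

theorem sparsity_comp_equiv (x : α → ℝ) (e : β ≃ α) : sparsity (x ∘ e) = sparsity x := by
  rw [sparsity_eq_ncard_support, Function.support_comp_eq_preimage,
    Set.ncard_preimage_of_injective_subset_range e.injective (by simp)]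
  rfl

theorem sparsity_pi_single [DecidableEq α] (a : α) {c : ℝ} (hc : c ≠ 0) :
    sparsity (Pi.single a c : α → ℝ) = 1 := by
  rw [sparsity_eq_ncard_support, Pi.support_single_of_ne hc, Set.ncard_singleton]

theorem sparsity_prod_apply {ι : Type*} [Fintype ι] {κ : ι → Type*} (w : ∀ i, κ i → ℝ) :
    sparsity (fun c : ∀ i, κ i => ∏ i, w i (c i)) = ∏ i, sparsity (w i) := by
  have hsupp : (fun c : ∀ i, κ i => ∏ i, w i (c i)).support =
      Set.univ.pi fun i => (w i).support := by
    ext c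
    simp [Finset.prod_ne_zero_iff]
  simp only [sparsity_eq_ncard_support, hsupp, Set.ncard_def, Set.encard_pi_eq_prod_encard,
    ENat.toNat_prod]

end Sparsity

open Matrix

section NullVector

variable {l m n o : Type*} [Fintype n] [Fintype o]

def HasSparseNullVector (A : Matrix m n ℝ) (k : ℕ) : Prop :=
  ∃ x : n → ℝ, x ≠ 0 ∧ A *ᵥ x = 0 ∧ sparsity x ≤ k

theorem spark_le_iff [Fintype m] {A : Matrix m n ℝ} (hA : ∃ x : n → ℝ, x ≠ 0 ∧ A *ᵥ x = 0)
    {k : ℕ} : spark A ≤ k ↔ HasSparseNullVector A k := by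
  rw [spark, if_pos hA]
  set S := {k | ∃ x : n → ℝ, x ≠ 0 ∧ A *ᵥ x = 0 ∧ sparsity x = k}
  have hmem : ∀ x : n → ℝ, x ≠ 0 → A *ᵥ x = 0 → sparsity x ∈ S :=
    fun x hx hAx => ⟨x, hx, hAx, rfl⟩
  constructor
  · intro hk
    obtain ⟨x, hx, hAx⟩ := hA
    obtain ⟨y, hy, hAy, hsy⟩ := Nat.sInf_mem ⟨_, hmem x hx hAx⟩
    exact ⟨y, hy, hAy, hsy ▸ hk⟩
  · rintro ⟨x, hx, hAx, hsx⟩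
    exact (Nat.sInf_le (hmem x hx hAx)).trans hsx

theorem HasSparseNullVector.of_submatrix_equiv {A : Matrix m n ℝ} {k : ℕ} (e₁ : l ≃ m)
    (e₂ : o ≃ n) (h : HasSparseNullVector (A.submatrix e₁ e₂) k) : HasSparseNullVector A k := by
  obtain ⟨x, hx, hAx, hsx⟩ := h
  refine ⟨x ∘ e₂.symm, fun h0 => hx ?_, ?_, (sparsity_comp_equiv x e₂.symm).trans_le hsx⟩
  · exact funext fun a => by simpa using congrFun h0 (e₂ a)
  · rw [Matrix.submatrix_mulVec_equiv] at hAx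
    exact funext fun a => by simpa using congrFun hAx (e₁.symm a)

theorem HasSparseNullVector.of_kronecker {m' n' : Type*} [Fintype n'] {A : Matrix m n ℝ}
    {B : Matrix m' n' ℝ} {k : ℕ} (h : HasSparseNullVector (A ⊗ₖ B) k) :
    HasSparseNullVector A k ∨ HasSparseNullVector B k := by
  obtain ⟨x, hx, hABx, hsx⟩ := h
  -- `y = (1 ⊗ B) x`, so `(A ⊗ 1) y = (A ⊗ B) x = 0`.
  set y : n → m' → ℝ := fun c => B *ᵥ fun d => x (c, d) with hy
  by_cases hy0 : y = 0
  · right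
    obtain ⟨⟨c, d⟩, hcd⟩ := Function.support_nonempty_iff.mpr hx
    refine ⟨fun d => x (c, d), fun h0 => hcd (congrFun h0 d), congrFun hy0 c, ?_⟩
    refine (sparsity_le_of_support_subset_image Prod.snd fun d hd => ?_).trans hsx
    exact ⟨(c, d), hd, rfl⟩
  · left
    obtain ⟨c, r, hcr⟩ : ∃ c r, y c r ≠ 0 := by
      by_contra! h
      exact hy0 (funext fun c => funext (h c))
    refine ⟨fun c => y c r, fun h0 => hcr (congrFun h0 c), ?_, ?_⟩
    · funext r'
      have := congrFun hABx (r', r)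
      simp only [mulVec, dotProduct, Fintype.sum_prod_type, kronecker_apply, hy] at this ⊢
      simpa [Finset.mul_sum, mul_assoc] using this
    · refine (sparsity_le_of_support_subset_image Prod.fst fun c hc => ?_).trans hsx
      obtain ⟨d, -, hd⟩ := Finset.exists_ne_zero_of_sum_ne_zero hc
      exact ⟨(c, d), right_ne_zero_of_mul hd, rfl⟩

end NullVector

section KronFamily

variable {N : ℕ} {m n : Fin N → ℕ}

theorem kronFamily_mulVec_prod (A : ∀ i, Matrix (Fin (m i)) (Fin (n i)) ℝ)
    (w : ∀ i, Fin (n i) → ℝ) :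
    kronFamily A *ᵥ (fun c => ∏ i, w i (c i)) = fun r => ∏ i, (A i *ᵥ w i) (r i) := by
  funext r
  simp only [mulVec, dotProduct, Finset.prod_univ_sum, Fintype.piFinset_univ, kronFamily,
    Finset.prod_mul_distrib]

theorem kronFamily_succ {m n : Fin (N + 1) → ℕ} (A : ∀ i, Matrix (Fin (m i)) (Fin (n i)) ℝ) :
    kronFamily A = (A 0 ⊗ₖ kronFamily fun i => A i.succ).submatrix
      (Fin.consEquiv _).symm (Fin.consEquiv _).symm := by
  ext r c
  simp [kronFamily, Fin.prod_univ_succ, Fin.consEquiv, Fin.tail]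

theorem HasSparseNullVector.of_kronFamily {A : ∀ i, Matrix (Fin (m i)) (Fin (n i)) ℝ} {k : ℕ}
    (h : HasSparseNullVector (kronFamily A) k) : ∃ i, HasSparseNullVector (A i) k := by
  induction N with
  | zero =>
    obtain ⟨x, hx, hAx, -⟩ := h
    refine absurd (funext fun c => ?_) hx
    rw [Unique.eq_default c]
    simpa [mulVec, dotProduct, kronFamily] using congrFun hAx fun i => i.elim0
  | succ N ih =>
    rw [kronFamily_succ] at h
    rcases (h.of_submatrix_equiv _ _).of_kronecker with h₀ | htail
    · exact ⟨0, h₀⟩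
    · obtain ⟨i, hi⟩ := ih htail
      exact ⟨i.succ, hi⟩

theorem HasSparseNullVector.kronFamily {A : ∀ i, Matrix (Fin (m i)) (Fin (n i)) ℝ} {k : ℕ}
    (hn : ∀ j, 0 < n j) {i : Fin N} (h : HasSparseNullVector (A i) k) :
    HasSparseNullVector (kronFamily A) k := by
  obtain ⟨x, hx, hAx, hsx⟩ := h
  set w : ∀ j, Fin (n j) → ℝ := Function.update (fun j => Pi.single ⟨0, hn j⟩ 1) i x
  have hsw : ∏ j, sparsity (w j) = sparsity x := by
    refine (Finset.prod_eq_single i (fun j _ hj => ?_) (by simp)).trans (by simp [w])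
    simp [w, hj, sparsity_pi_single]
  have hsz : sparsity (fun c : ∀ j, Fin (n j) => ∏ j, w j (c j)) = sparsity x :=
    (sparsity_prod_apply w).trans hsw
  refine ⟨_, sparsity_pos_iff.mp (hsz ▸ sparsity_pos_iff.mpr hx), ?_, hsz.trans_le hsx⟩
  rw [kronFamily_mulVec_prod]
  funext r
  exact Finset.prod_eq_zero (Finset.mem_univ i) (by simp [w, hAx])

theorem hasSparseNullVector_kronFamily_iff {A : ∀ i, Matrix (Fin (m i)) (Fin (n i)) ℝ} {k : ℕ}
    (hn : ∀ j, 0 < n j) :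
    HasSparseNullVector (kronFamily A) k ↔ ∃ i, HasSparseNullVector (A i) k :=
  ⟨HasSparseNullVector.of_kronFamily, fun ⟨_, h⟩ => h.kronFamily hn⟩

end KronFamily

theorem stmt7 {N : ℕ} (hN : 0 < N) {m n : Fin N → ℕ}
    (A : ∀ i, Matrix (Fin (m i)) (Fin (n i)) ℝ)
    (hker : ∀ i, ∃ x : Fin (n i) → ℝ, x ≠ 0 ∧ (A i).mulVec x = 0) :
    spark (kronFamily A) =
      Finset.univ.inf' ⟨⟨0, hN⟩, Finset.mem_univ _⟩ (fun i => spark (A i)) := by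
  have hn : ∀ j, 0 < n j := fun j =>
    let ⟨x, hx, _⟩ := hker j
    Fin.pos_iff_nonempty.mpr (not_isEmpty_iff.mp fun _ => hx (Subsingleton.elim x 0))
  have hkerA : ∃ z, z ≠ 0 ∧ kronFamily A *ᵥ z = 0 := by
    obtain ⟨x, hx, hAx⟩ := hker ⟨0, hN⟩
    obtain ⟨z, hz, hAz, -⟩ := (hasSparseNullVector_kronFamily_iff hn).mpr
      ⟨⟨0, hN⟩, x, hx, hAx, le_rfl⟩
    exact ⟨z, hz, hAz⟩
  refine eq_of_forall_ge_iff fun k => ?_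
  rw [spark_le_iff hkerA, hasSparseNullVector_kronFamily_iff hn]
  refine Iff.trans ?_ (Finset.inf'_le_iff _).symm
  simp only [Finset.mem_univ, true_and, spark_le_iff (hker _)]
end

section
/- If A ∈ ℝ^{m×n} (m ≤ n) has unit-norm columns and full row rank m, then its mutual incoherence satisfies M(A) ≥ √((n − m)/(m(n − 1))). -/
open Classical Kronecker

/-!
With `G = Aᵀ A` the Gram matrix of the unit columns, `tr (A Aᵀ) = tr G = n`, and Cauchy–Schwarz
on the `m` diagonal entries of `A Aᵀ` gives `n² ≤ m ‖A Aᵀ‖_F² = m ‖G‖_F²`. The diagonal of `G`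
contributes `n` to `‖G‖_F²` and each of the `n (n - 1)` off-diagonal entries at most `M(A)²`,
so `n² ≤ m (n + n (n - 1) M(A)²)`, which rearranges to the bound.
-/

namespace Matrix

variable {ι κ : Type*} [Fintype ι] [Fintype κ]

theorem sum_sq_eq_trace_mul_transpose (B : Matrix ι κ ℝ) :
    ∑ i, ∑ j, B i j ^ 2 = trace (B * Bᵀ) := by
  simp [trace, mul_apply, sq]

theorem sum_sq_mul_transpose_self_eq (A : Matrix ι κ ℝ) :
    ∑ k, ∑ l, (A * Aᵀ) k l ^ 2 = ∑ i, ∑ j, (Aᵀ * A) i j ^ 2 := by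
  simp only [sum_sq_eq_trace_mul_transpose, transpose_mul, transpose_transpose, Matrix.mul_assoc]
  rw [trace_mul_comm, Matrix.mul_assoc, Matrix.mul_assoc]

theorem sq_trace_le_card_mul_sum_sq (B : Matrix ι ι ℝ) :
    trace B ^ 2 ≤ Fintype.card ι * ∑ i, ∑ j, B i j ^ 2 :=
  calc trace B ^ 2 ≤ Fintype.card ι * ∑ i, B i i ^ 2 := sq_sum_le_card_mul_sum_sq
    _ ≤ Fintype.card ι * ∑ i, ∑ j, B i j ^ 2 := by
      gcongr with i
      exact Finset.single_le_sum (f := fun j => B i j ^ 2) (fun _ _ => sq_nonneg _)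
        (Finset.mem_univ i)

theorem sum_sq_le_of_diag_eq_one {G : Matrix ι ι ℝ} {μ : ℝ} (hdiag : ∀ i, G i i = 1)
    (hoff : ∀ i j, i ≠ j → |G i j| ≤ μ) :
    ∑ i, ∑ j, G i j ^ 2 ≤ Fintype.card ι + Fintype.card ι * (Fintype.card ι - 1) * μ ^ 2 := by
  have hrow : ∀ i, ∑ j, G i j ^ 2 ≤ 1 + (Fintype.card ι - 1) * μ ^ 2 := by
    intro i
    rw [← Finset.add_sum_erase _ _ (Finset.mem_univ i), hdiag, one_pow]
    gcongr
    calc ∑ j ∈ Finset.univ.erase i, G i j ^ 2 ≤ ∑ j ∈ Finset.univ.erase i, μ ^ 2 := by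
          refine Finset.sum_le_sum fun j hj => ?_
          rw [← sq_abs]
          exact pow_le_pow_left₀ (abs_nonneg _) (hoff i j (Finset.ne_of_mem_erase hj).symm) 2
      _ = (Fintype.card ι - 1) * μ ^ 2 := by
          rw [Finset.sum_const, Finset.card_erase_of_mem (Finset.mem_univ i), nsmul_eq_mul,
            Finset.card_univ, Nat.cast_pred (Fintype.card_pos_iff.2 ⟨i⟩)]
  calc ∑ i, ∑ j, G i j ^ 2 ≤ ∑ _i : ι, (1 + (Fintype.card ι - 1) * μ ^ 2) :=
        Finset.sum_le_sum fun i _ => hrow i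
    _ = _ := by rw [Finset.sum_const, Finset.card_univ, nsmul_eq_mul]; ring

theorem trace_mul_transpose_of_unit_cols {A : Matrix ι κ ℝ}
    (hcols : ∀ j, ∑ k, A k j ^ 2 = 1) : trace (A * Aᵀ) = Fintype.card κ := by
  rw [trace_mul_comm]
  simp [trace, mul_apply, ← sq, hcols]

end Matrix

section MutualIncoherence

open Matrix

variable {ι κ : Type*} [Fintype ι]

theorem mutInc_nonneg (A : Matrix ι κ ℝ) : 0 ≤ mutInc A :=
  Real.sSup_nonneg <| by rintro _ ⟨i, j, -, rfl⟩; exact abs_nonneg _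

theorem abs_transpose_mul_self_apply_le_mutInc [Finite κ] (A : Matrix ι κ ℝ) {i j : κ}
    (hij : i ≠ j) :
    |(Aᵀ * A) i j| ≤ mutInc A := by
  refine le_csSup ?_ ⟨i, j, hij, by simp [Matrix.mul_apply]⟩
  refine ((Set.finite_univ (α := κ × κ)).image fun p => |∑ k, A k p.1 * A k p.2|).bddAbove.mono
    ?_
  rintro _ ⟨i, j, -, rfl⟩
  exact ⟨(i, j), trivial, rfl⟩

theorem welch_bound [Fintype κ] {A : Matrix ι κ ℝ} (hcols : ∀ j, ∑ k, A k j ^ 2 = 1) :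
    (Fintype.card κ : ℝ) ^ 2 ≤
      Fintype.card ι * (Fintype.card κ + Fintype.card κ * (Fintype.card κ - 1) * mutInc A ^ 2) := by
  have hdiag : ∀ j, (Aᵀ * A) j j = 1 := fun j => by simpa [mul_apply, ← sq] using hcols j
  calc (Fintype.card κ : ℝ) ^ 2 = trace (A * Aᵀ) ^ 2 := by
        rw [trace_mul_transpose_of_unit_cols hcols]
    _ ≤ Fintype.card ι * ∑ k, ∑ l, (A * Aᵀ) k l ^ 2 := sq_trace_le_card_mul_sum_sq _
    _ = Fintype.card ι * ∑ i, ∑ j, (Aᵀ * A) i j ^ 2 := by rw [sum_sq_mul_transpose_self_eq]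
    _ ≤ _ := by
      gcongr
      exact sum_sq_le_of_diag_eq_one hdiag fun i j hij =>
        abs_transpose_mul_self_apply_le_mutInc A hij

end MutualIncoherence

theorem stmt8_general {m n : ℕ} (hmn : m ≤ n) (A : Matrix (Fin m) (Fin n) ℝ)
    (hcols : ∀ j, ∑ k, (A k j) ^ 2 = 1) :
    Real.sqrt (((n : ℝ) - m) / (m * ((n : ℝ) - 1))) ≤ mutInc A := by
  have hwelch := welch_bound hcols
  simp only [Fintype.card_fin] at hwelch
  have hM := mutInc_nonneg A
  rw [Real.sqrt_le_left hM]
  rcases Nat.eq_zero_or_pos n with rfl | hn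
  · simp [Nat.le_zero.1 hmn, sq_nonneg]
  have hn1 : (1 : ℝ) ≤ n := by exact_mod_cast hn
  -- a zero denominator (`n = 1` or `m = 0`) is harmless, as `x / 0 = 0`
  refine div_le_of_le_mul₀ (by positivity) (by positivity) ?_
  nlinarith

theorem stmt8 {m n : ℕ} (hmn : m ≤ n) (A : Matrix (Fin m) (Fin n) ℝ)
    (hcols : ∀ j, ∑ k, (A k j) ^ 2 = 1) (hrank : A.rank = m) :
    Real.sqrt (((n : ℝ) - m) / (m * ((n : ℝ) - 1))) ≤ mutInc A :=
  stmt8_general hmn A hcols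
end

section
/- For matrices A and B with unit-norm columns, δ₂(A ⊗ B) = max{δ₂(A), δ₂(B)}. -/
open Classical Kronecker

/-!
For unit columns `c_i`, a vector supported on `{i, j}` satisfies
`‖C x‖² = x_i² + x_j² + 2 x_i x_j ⟪c_i, c_j⟫`, and `|2 x_i x_j| ≤ x_i² + x_j²` with equality at
`x_i = x_j`; hence the best 2-restricted isometry constant is exactly the mutual incoherence.
The columns of `A ⊗ B` are the unit vectors `a_i ⊗ b_k` with
`⟪a_i ⊗ b_k, a_j ⊗ b_l⟫ = ⟪a_i, a_j⟫ ⟪b_k, b_l⟫`, and by Cauchy–Schwarz the largest off-diagonal value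
of such a product is attained with one factor equal to `1`.
-/

section MutualIncoherence

variable {m n : Type*} [Fintype m]

lemma mutInc_nonneg_s16 (C : Matrix m n ℝ) : 0 ≤ mutInc C :=
  Real.sSup_nonneg <| by rintro v ⟨i, j, -, rfl⟩; exact abs_nonneg _

lemma abs_sum_mul_le_mutInc [Finite n] (C : Matrix m n ℝ) {i j : n} (hij : i ≠ j) :
    |∑ k, C k i * C k j| ≤ mutInc C := by
  refine le_csSup ?_ ⟨i, j, hij, rfl⟩
  refine (Set.finite_range fun p : n × n => |∑ k, C k p.1 * C k p.2|).bddAbove.mono ?_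
  rintro v ⟨i, j, -, rfl⟩
  exact ⟨(i, j), rfl⟩

lemma mutInc_le {C : Matrix m n ℝ} {c : ℝ} (h : ∀ i j, i ≠ j → |∑ k, C k i * C k j| ≤ c)
    (hc : 0 ≤ c) : mutInc C ≤ c :=
  Real.sSup_le (by rintro v ⟨i, j, hij, rfl⟩; exact h i j hij) hc

lemma abs_sum_mul_le_one {C : Matrix m n ℝ} (hC : ∀ j, ∑ k, (C k j) ^ 2 = 1) (i j : n) :
    |∑ k, C k i * C k j| ≤ 1 := by
  have h := Finset.sum_mul_sq_le_sq_mul_sq Finset.univ (fun k => C k i) (fun k => C k j)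
  rw [hC i, hC j, one_mul] at h
  exact (sq_le_one_iff_abs_le_one _).mp h

lemma sum_mul_self_eq_one {C : Matrix m n ℝ} (hC : ∀ j, ∑ k, (C k j) ^ 2 = 1) (i : n) :
    ∑ k, C k i * C k i = 1 := by
  simpa only [sq] using hC i

end MutualIncoherence

section TwoSparse

variable {m n : Type*} [Fintype m] [Fintype n]

lemma sparsity_le_two_iff [Nontrivial n] {x : n → ℝ} :
    sparsity x ≤ 2 ↔ ∃ i j, i ≠ j ∧ ∀ k, k ≠ i → k ≠ j → x k = 0 := by
  constructor
  · intro hx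
    have hcard : (Set.toFinset {i | x i ≠ 0}).card ≤ 2 := by
      rwa [← Set.ncard_eq_toFinset_card']
    obtain ⟨t, hst, ht⟩ := Finset.exists_superset_card_eq hcard Fintype.one_lt_card
    obtain ⟨i, j, hij, rfl⟩ := Finset.card_eq_two.mp ht
    refine ⟨i, j, hij, fun k hki hkj => ?_⟩
    by_contra hk
    simpa [hki, hkj] using hst (Set.mem_toFinset.mpr hk)
  · rintro ⟨i, j, hij, hx⟩
    calc sparsity x ≤ ({i, j} : Set n).ncard :=
          Set.ncard_le_ncard (fun k hk => by by_contra h; simp_all) (Set.toFinite _)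
      _ = 2 := Set.ncard_pair hij

lemma sum_sq_mulVec_of_pair {C : Matrix m n ℝ} (hC : ∀ j, ∑ k, (C k j) ^ 2 = 1)
    {x : n → ℝ} {i j : n} (hij : i ≠ j) (hx : ∀ k, k ≠ i → k ≠ j → x k = 0) :
    ∑ k, (C.mulVec x k) ^ 2 = x i ^ 2 + x j ^ 2 + 2 * x i * x j * ∑ k, C k i * C k j := by
  have hCx : ∀ k, C.mulVec x k ^ 2 = C k i ^ 2 * x i ^ 2 + C k j ^ 2 * x j ^ 2
      + 2 * x i * x j * (C k i * C k j) := fun k => by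
    rw [Matrix.mulVec, dotProduct,
      Fintype.sum_eq_add i j hij fun l hl => by rw [hx l hl.1 hl.2, mul_zero]]
    ring
  simp only [hCx, Finset.sum_add_distrib, ← Finset.sum_mul, ← Finset.mul_sum, hC, one_mul]

lemma ripConst_two_eq_mutInc [Nontrivial n] {C : Matrix m n ℝ}
    (hC : ∀ j, ∑ k, (C k j) ^ 2 = 1) : ripConst 2 C = mutInc C := by
  refine IsLeast.csInf_eq ⟨⟨mutInc_nonneg_s16 C, fun x hx => ?_⟩, fun δ ⟨hδ, hrip⟩ => ?_⟩
  · obtain ⟨i, j, hij, hsupp⟩ := sparsity_le_two_iff.mp hx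
    have hnorm : ∑ k, x k ^ 2 = x i ^ 2 + x j ^ 2 :=
      Fintype.sum_eq_add i j hij fun k hk => by rw [hsupp k hk.1 hk.2]; ring
    have hμ := abs_le.mp (abs_sum_mul_le_mutInc C hij)
    rw [sum_sq_mulVec_of_pair hC hij hsupp, hnorm]
    constructor <;> nlinarith [sq_nonneg (x i - x j), sq_nonneg (x i + x j)]
  · refine mutInc_le (fun i j hij => ?_) hδ
    set x : n → ℝ := fun k => if k = i ∨ k = j then 1 else 0
    have hsupp : ∀ k, k ≠ i → k ≠ j → x k = 0 := fun k hki hkj => by simp [x, hki, hkj]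
    have hnorm : ∑ k, x k ^ 2 = 2 := by
      rw [Fintype.sum_eq_add i j hij fun k hk => by rw [hsupp k hk.1 hk.2]; ring]
      norm_num [x]
    obtain ⟨hlower, hupper⟩ := hrip x (sparsity_le_two_iff.mpr ⟨i, j, hij, hsupp⟩)
    rw [sum_sq_mulVec_of_pair hC hij hsupp, hnorm] at hlower hupper
    simp only [x, true_or, or_true, if_true] at hlower hupper
    rw [abs_le]
    constructor <;> linarith

end TwoSparse

section Kronecker

variable {m₁ n₁ m₂ n₂ : Type*} [Fintype m₁] [Fintype m₂]

lemma sum_kronecker_mul_kronecker (A : Matrix m₁ n₁ ℝ) (B : Matrix m₂ n₂ ℝ)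
    (p q : n₁ × n₂) :
    ∑ k, (A ⊗ₖ B) k p * (A ⊗ₖ B) k q
      = (∑ k, A k p.1 * A k q.1) * ∑ l, B l p.2 * B l q.2 := by
  rw [Finset.sum_mul_sum, Fintype.sum_prod_type]
  simp only [Matrix.kroneckerMap_apply]
  exact Finset.sum_congr rfl fun _ _ => Finset.sum_congr rfl fun _ _ => by ring

variable {A : Matrix m₁ n₁ ℝ} {B : Matrix m₂ n₂ ℝ}

lemma sum_sq_kronecker_eq_one (hA : ∀ j, ∑ k, (A k j) ^ 2 = 1)
    (hB : ∀ j, ∑ k, (B k j) ^ 2 = 1) (p : n₁ × n₂) :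
    ∑ k, ((A ⊗ₖ B) k p) ^ 2 = 1 := by
  simpa only [sq, sum_mul_self_eq_one hA, sum_mul_self_eq_one hB, mul_one]
    using sum_kronecker_mul_kronecker A B p p

lemma mutInc_kronecker [Finite n₁] [Finite n₂] [Nonempty n₁] [Nonempty n₂]
    (hA : ∀ j, ∑ k, (A k j) ^ 2 = 1) (hB : ∀ j, ∑ k, (B k j) ^ 2 = 1) :
    mutInc (A ⊗ₖ B) = max (mutInc A) (mutInc B) := by
  obtain ⟨i₀⟩ := ‹Nonempty n₁›
  obtain ⟨j₀⟩ := ‹Nonempty n₂›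
  apply le_antisymm
  · refine mutInc_le (fun p q hpq => ?_) ((mutInc_nonneg_s16 A).trans (le_max_left _ _))
    rw [sum_kronecker_mul_kronecker, abs_mul]
    by_cases h₁ : p.1 = q.1
    · rw [h₁, sum_mul_self_eq_one hA, abs_one, one_mul]
      exact le_max_of_le_right <| abs_sum_mul_le_mutInc B fun h₂ => hpq (Prod.ext h₁ h₂)
    · calc |∑ k, A k p.1 * A k q.1| * |∑ l, B l p.2 * B l q.2|
          ≤ |∑ k, A k p.1 * A k q.1| :=
            mul_le_of_le_one_right (abs_nonneg _) (abs_sum_mul_le_one hB _ _)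
        _ ≤ max (mutInc A) (mutInc B) := le_max_of_le_left (abs_sum_mul_le_mutInc A h₁)
  · refine max_le (mutInc_le (fun i j hij => ?_) (mutInc_nonneg_s16 _))
      (mutInc_le (fun i j hij => ?_) (mutInc_nonneg_s16 _))
    · have h := abs_sum_mul_le_mutInc (A ⊗ₖ B) (i := (i, j₀)) (j := (j, j₀)) (by simp [hij])
      rwa [sum_kronecker_mul_kronecker, sum_mul_self_eq_one hB, mul_one] at h
    · have h := abs_sum_mul_le_mutInc (A ⊗ₖ B) (i := (i₀, i)) (j := (i₀, j)) (by simp [hij])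
      rwa [sum_kronecker_mul_kronecker, sum_mul_self_eq_one hA, one_mul] at h

end Kronecker

theorem stmt16 {m₁ n₁ m₂ n₂ : ℕ} (hn₁ : 2 ≤ n₁) (hn₂ : 2 ≤ n₂)
    (A : Matrix (Fin m₁) (Fin n₁) ℝ) (B : Matrix (Fin m₂) (Fin n₂) ℝ)
    (hA : ∀ j, ∑ k, (A k j) ^ 2 = 1) (hB : ∀ j, ∑ k, (B k j) ^ 2 = 1) :
    ripConst 2 (A ⊗ₖ B) = max (ripConst 2 A) (ripConst 2 B) := by
  have : Nontrivial (Fin n₁) := Fin.nontrivial_iff_two_le.mpr hn₁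
  have : Nontrivial (Fin n₂) := Fin.nontrivial_iff_two_le.mpr hn₂
  rw [ripConst_two_eq_mutInc hA, ripConst_two_eq_mutInc hB,
    ripConst_two_eq_mutInc (sum_sq_kronecker_eq_one hA hB), mutInc_kronecker hA hB]
end
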